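/- (Theorem 1, part T.1) Fix a real number p with 1 ≤ p < ∞. Let K be a causal, L_p-stable operator mapping ℝ^{d_y}-valued signals to ℝ^{d_u}-valued signals that is incrementally L_p-stable with gain γ ≥ 0, and let Ŝ be a strictly causal L_p-stable operator mapping ℝ^{d_u}-valued signals to ℝ^{d_y}-valued signals. Then for all signals r ∈ ℓ_p (ℝ^{d_u}-valued) and v ∈ ℓ_p (ℝ^{d_y}-valued), the unique signals û, ŷ°, ŷ satisfying ŷ° = Ŝ(û − K(ŷ°)), ŷ = ŷ° + v, and û = r + K(ŷ) satisfy û ∈ ℓ_p and ŷ ∈ ℓ_p; that is, the ICI model Ĝ defined by Ŝ and K is stabilized by K in the sense of closed-loop L_p-stability. -/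

import Mathlib

/-- A signal in `ℝ^d` is a function `ℕ → ℝ^d`. -/
abbrev Signal (d : ℕ) := ℕ → EuclideanSpace ℝ (Fin d)

/-- An operator is causal if its output at time `t` depends only on inputs up to time `t`. -/
def Causal {d₁ d₂ : ℕ} (Υ : Signal d₁ → Signal d₂) : Prop :=
  ∀ (x z : Signal d₁) (t : ℕ), (∀ s ≤ t, x s = z s) → Υ x t = Υ z t

/-- An operator is strictly causal if its output at time `t` depends only on inputs
up to time `t - 1`. -/
def StrictlyCausal {d₁ d₂ : ℕ} (Υ : Signal d₁ → Signal d₂) : Prop :=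
  ∀ (x z : Signal d₁) (t : ℕ), (∀ s < t, x s = z s) → Υ x t = Υ z t

/-- A signal belongs to `ℓ_p` if `∑ₜ ‖x t‖ ^ p < ∞`. -/
def MemLp (p : ℝ) {d : ℕ} (x : Signal d) : Prop :=
  Summable fun t => ‖x t‖ ^ p

/-- The `ℓ_p`-norm of a signal: `(∑ₜ ‖x t‖ ^ p) ^ (1/p)`. -/
noncomputable def lpNorm (p : ℝ) {d : ℕ} (x : Signal d) : ℝ :=
  (∑' t, ‖x t‖ ^ p) ^ (1 / p)

/-- An operator is `L_p`-stable if it maps `ℓ_p` signals to `ℓ_p` signals. -/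
def LpStable (p : ℝ) {d₁ d₂ : ℕ} (Υ : Signal d₁ → Signal d₂) : Prop :=
  ∀ x : Signal d₁, MemLp p x → MemLp p (Υ x)

/-- An operator is incrementally `L_p`-stable with gain `γ` if
`‖Υ(x₁) − Υ(x₂)‖_p ≤ γ ‖x₁ − x₂‖_p` for all `x₁, x₂ ∈ ℓ_p`. -/
def IncLpStable (p : ℝ) (γ : ℝ) {d₁ d₂ : ℕ} (Υ : Signal d₁ → Signal d₂) : Prop :=
  ∀ x₁ x₂ : Signal d₁, MemLp p x₁ → MemLp p x₂ →
    lpNorm p (Υ x₁ - Υ x₂) ≤ γ * lpNorm p (x₁ - x₂)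

/-! Since `ŷ - ŷ° = v ∈ ℓ_p`, causality of `K` lets its incremental gain bound be applied to the
truncations of `ŷ` and `ŷ°`, which lie in `ℓ_p`; hence `K ŷ - K ŷ° ∈ ℓ_p`. The input of `Ŝ` is
then `û - K ŷ° = r + (K ŷ - K ŷ°) ∈ ℓ_p`, so `ŷ° = Ŝ (û - K ŷ°)`, `ŷ = ŷ° + v` and `û = r + K ŷ`
are in `ℓ_p` as well. -/

open Set

variable {p γ : ℝ} {d d₁ d₂ : ℕ} {K : Signal d₁ → Signal d₂}

theorem memLp_iff_memℓp (hp : 0 < p) {x : Signal d} :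
    MemLp p x ↔ Memℓp x (ENNReal.ofReal p) := by
  have hp' : (ENNReal.ofReal p).toReal = p := ENNReal.toReal_ofReal hp.le
  rw [memℓp_gen_iff (hp'.symm ▸ hp), hp', MemLp]

theorem MemLp.add (hp : 0 < p) {x y : Signal d} (hx : MemLp p x) (hy : MemLp p y) :
    MemLp p (x + y) :=
  (memLp_iff_memℓp hp).2 (((memLp_iff_memℓp hp).1 hx).add ((memLp_iff_memℓp hp).1 hy))

theorem MemLp.sub (hp : 0 < p) {x y : Signal d} (hx : MemLp p x) (hy : MemLp p y) :
    MemLp p (x - y) :=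
  (memLp_iff_memℓp hp).2 (((memLp_iff_memℓp hp).1 hx).sub ((memLp_iff_memℓp hp).1 hy))

theorem memLp_indicator_Iic (hp : p ≠ 0) (x : Signal d) (T : ℕ) :
    MemLp p ((Iic T).indicator x) := by
  refine summable_of_ne_finset_zero (s := Finset.range (T + 1)) fun t ht => ?_
  have htT : t ∉ Iic T := by simpa [Nat.lt_succ_iff] using ht
  rw [indicator_of_notMem htT, norm_zero, Real.zero_rpow hp]

theorem lpNorm_nonneg (x : Signal d) : 0 ≤ lpNorm p x :=
  Real.rpow_nonneg (tsum_nonneg fun _ => by positivity) _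

theorem lpNorm_rpow_self (hp : p ≠ 0) (x : Signal d) : lpNorm p x ^ p = ∑' t, ‖x t‖ ^ p := by
  rw [lpNorm, ← Real.rpow_mul (tsum_nonneg fun _ => by positivity), one_div_mul_cancel hp,
    Real.rpow_one]

theorem lpNorm_indicator_le (hp : 0 < p) {x : Signal d} (hx : MemLp p x) (s : Set ℕ) :
    lpNorm p (s.indicator x) ≤ lpNorm p x := by
  have hle : ∀ t, ‖s.indicator x t‖ ^ p ≤ ‖x t‖ ^ p := fun t =>
    Real.rpow_le_rpow (norm_nonneg _) (norm_indicator_le_norm_self x t) hp.le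
  refine Real.rpow_le_rpow (tsum_nonneg fun _ => by positivity) ?_ (by positivity)
  exact (hx.of_nonneg_of_le (fun _ => by positivity) hle).tsum_le_tsum hle hx

theorem Causal.apply_indicator_Iic (hK : Causal K) (x : Signal d₁) {t T : ℕ} (ht : t ≤ T) :
    K ((Iic T).indicator x) t = K x t :=
  hK _ _ t fun _ hs => indicator_of_mem (mem_Iic.2 (hs.trans ht)) x

theorem Causal.memLp_sub_of_incLpStable (hp : 0 < p) (hγ : 0 ≤ γ) (hKc : Causal K)
    (hKlp : LpStable p K) (hKinc : IncLpStable p γ K) {x y : Signal d₁}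
    (hxy : MemLp p (x - y)) : MemLp p (K x - K y) := by
  refine summable_of_sum_range_le (c := (γ * lpNorm p (x - y)) ^ p)
    (fun _ => by positivity) fun n => ?_
  set xₙ := (Iic n).indicator x
  set yₙ := (Iic n).indicator y
  have hxₙ : MemLp p xₙ := memLp_indicator_Iic hp.ne' x n
  have hyₙ : MemLp p yₙ := memLp_indicator_Iic hp.ne' y n
  have hgain : lpNorm p (K xₙ - K yₙ) ≤ γ * lpNorm p (x - y) :=
    calc lpNorm p (K xₙ - K yₙ) ≤ γ * lpNorm p ((Iic n).indicator (x - y)) := by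
          rw [indicator_sub']; exact hKinc _ _ hxₙ hyₙ
      _ ≤ γ * lpNorm p (x - y) :=
          mul_le_mul_of_nonneg_left (lpNorm_indicator_le hp hxy _) hγ
  calc ∑ t ∈ Finset.range n, ‖(K x - K y) t‖ ^ p
      = ∑ t ∈ Finset.range n, ‖(K xₙ - K yₙ) t‖ ^ p := by
        refine Finset.sum_congr rfl fun t ht => ?_
        have htn : t ≤ n := (Finset.mem_range.1 ht).le
        rw [Pi.sub_apply, Pi.sub_apply, hKc.apply_indicator_Iic x htn,
          hKc.apply_indicator_Iic y htn]
    _ ≤ ∑' t, ‖(K xₙ - K yₙ) t‖ ^ p :=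
        Summable.sum_le_tsum _ (fun _ _ => by positivity) ((hKlp _ hxₙ).sub hp (hKlp _ hyₙ))
    _ = lpNorm p (K xₙ - K yₙ) ^ p := (lpNorm_rpow_self hp.ne' _).symm
    _ ≤ (γ * lpNorm p (x - y)) ^ p :=
        Real.rpow_le_rpow (lpNorm_nonneg _) hgain hp.le

theorem ici_closedLoop_LpStable_general {du dy : ℕ} (p : ℝ) (hp : 1 ≤ p)
    (K : Signal dy → Signal du) (γ : ℝ) (hγ : 0 ≤ γ)
    (hKc : Causal K) (hKlp : LpStable p K) (hKinc : IncLpStable p γ K)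
    (Shat : Signal du → Signal dy)
    (hSlp : LpStable p Shat) :
    ∀ (r : Signal du) (v : Signal dy), MemLp p r → MemLp p v →
      ∀ (uhat : Signal du) (ycirc yhat : Signal dy),
        ycirc = Shat (uhat - K ycirc) → yhat = ycirc + v → uhat = r + K yhat →
        MemLp p uhat ∧ MemLp p yhat := by
  intro r v hr hv uhat ycirc yhat hycirc hyhat huhat
  have hp₀ : 0 < p := by linarith
  have hKdiff : MemLp p (K yhat - K ycirc) :=
    hKc.memLp_sub_of_incLpStable hp₀ hγ hKlp hKinc (by rwa [hyhat, add_sub_cancel_left])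
  have hSin : MemLp p (uhat - K ycirc) := by
    rw [huhat, add_sub_assoc]
    exact hr.add hp₀ hKdiff
  have hycircLp : MemLp p ycirc := by
    rw [hycirc]
    exact hSlp _ hSin
  have hy : MemLp p yhat := by
    rw [hyhat]
    exact hycircLp.add hp₀ hv
  refine ⟨?_, hy⟩
  rw [huhat]
  exact hr.add hp₀ (hKlp _ hy)

/-- **Theorem 1, part T.1.** If `K` is causal, `L_p`-stable and incrementally `L_p`-stable
with gain `γ ≥ 0`, and `Ŝ` (written `Shat`) is strictly causal and `L_p`-stable, then the
ICI model built from `Ŝ` and `K` is stabilized by `K`: for all `r, v ∈ ℓ_p`, the closed-loop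
signals `û, ŷ°, ŷ` satisfying `ŷ° = Ŝ(û − K(ŷ°))`, `ŷ = ŷ° + v`, `û = r + K(ŷ)` are in `ℓ_p`. -/
theorem ici_closedLoop_LpStable {du dy : ℕ} (p : ℝ) (hp : 1 ≤ p)
    (K : Signal dy → Signal du) (γ : ℝ) (hγ : 0 ≤ γ)
    (hKc : Causal K) (hKlp : LpStable p K) (hKinc : IncLpStable p γ K)
    (Shat : Signal du → Signal dy)
    (hSsc : StrictlyCausal Shat) (hSlp : LpStable p Shat) :
    ∀ (r : Signal du) (v : Signal dy), MemLp p r → MemLp p v →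
      ∀ (uhat : Signal du) (ycirc yhat : Signal dy),
        ycirc = Shat (uhat - K ycirc) → yhat = ycirc + v → uhat = r + K yhat →
        MemLp p uhat ∧ MemLp p yhat :=
  ici_closedLoop_LpStable_general p hp K γ hγ hKc hKlp hKinc Shat hSlp
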